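/- Let K be a set of q^2+2q+1 points in PG(4,q), q ≥ 3, satisfying the 3-space intersection hypotheses, with sticks m_0,...,m_q and baseline b. Suppose K contained the q+1 sticks and no other line. Then a contradiction follows; in particular, for any point X on a stick m and any other stick m', counting points of K in the 3-spaces through the plane ⟨X, m'⟩ yields |K| = q^2+q+2 ≠ q^2+2q+1. -/

import Mathlib

/-! The 3-space `S` spanned by two sticks meets every stick, since a line and a hyperplane of
`PG(4,q)` always meet. If `K ∩ S` were one, two or three lines, these would be sticks, and a
further stick would meet `S` in a point of `K` lying on another stick. Otherwise `K ∩ S` is a line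
and a conic, or a twisted cubic, and contains the two skew sticks spanning `S`. Any `d + 1` points
of a rational normal curve of degree `d` are independent (projective Vandermonde determinant), so
a conic meets a line in at most two points and a twisted cubic meets a line in at most three;
a line of `q + 1 ≥ 4` points therefore lies neither in a twisted cubic nor, unless it is `ℓ`
itself, in `ℓ ∪ C`. -/

open Projectivization

variable (F : Type) [Field F] [Fintype F]

/-- The points of the projective space `PG(n,q)` over a field `F` (of order `q`). -/
abbrev PGPt (n : ℕ) := Projectivization F (Fin (n + 1) → F)

/-- `S` is a projective subspace of (projective) dimension `d` of `PG(n,q)`. -/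
def IsSubsp (n d : ℕ) (S : Set (PGPt F n)) : Prop :=
  ∃ W : Submodule F (Fin (n + 1) → F), Module.finrank F W = d + 1 ∧
    S = {p | p.submodule ≤ W}

/-- A line of `PG(n,q)`. -/
abbrev IsLine (n : ℕ) (S : Set (PGPt F n)) : Prop := IsSubsp F n 1 S

/-- A plane of `PG(n,q)`. -/
abbrev IsPlane (n : ℕ) (S : Set (PGPt F n)) : Prop := IsSubsp F n 2 S

/-- A 3-space (hyperplane) of `PG(4,q)`. -/
abbrev IsSolid (S : Set (PGPt F 4)) : Prop := IsSubsp F 4 3 S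

/-- A non-degenerate conic of `PG(n,q)` : the image of the standard conic
`{[a² : ab : b²]}` of `PG(2,q)` under an injective linear map. -/
def IsConic (n : ℕ) (C : Set (PGPt F n)) : Prop :=
  ∃ f : (Fin 3 → F) →ₗ[F] (Fin (n + 1) → F), Function.Injective f ∧
    C = {p | ∃ a b : F, (a ≠ 0 ∨ b ≠ 0) ∧
      p.submodule = Submodule.span F {f ![a ^ 2, a * b, b ^ 2]}}

/-- A twisted cubic of `PG(n,q)` : the image of the standard twisted cubic
`{[a³ : a²b : ab² : b³]}` of `PG(3,q)` under an injective linear map. -/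
def IsTwistedCubic (n : ℕ) (C : Set (PGPt F n)) : Prop :=
  ∃ f : (Fin 4 → F) →ₗ[F] (Fin (n + 1) → F), Function.Injective f ∧
    C = {p | ∃ a b : F, (a ≠ 0 ∨ b ≠ 0) ∧
      p.submodule = Submodule.span F {f ![a ^ 3, a ^ 2 * b, a * b ^ 2, b ^ 3]}}

/-- A ruled cubic surface of `PG(4,q)` : the image, under a projective transformation,
of the standard scroll ruling the line `{[a : b : 0 : 0 : 0]}` and the conic
`{[0 : 0 : a² : ab : b²]}` according to a projectivity (normalized to the identity). -/
def IsRuledCubicSurface (K : Set (PGPt F 4)) : Prop :=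
  ∃ g : (Fin 5 → F) ≃ₗ[F] (Fin 5 → F),
    K = {p | ∃ a b s t : F, (a ≠ 0 ∨ b ≠ 0) ∧ (s ≠ 0 ∨ t ≠ 0) ∧
      p.submodule = Submodule.span F {g ![s * a, s * b, t * a ^ 2, t * (a * b), t * b ^ 2]}}

/-- The intersection of the 3-space `Pi` with `K` is one line. -/
def TypeOneLine (K Pi : Set (PGPt F 4)) : Prop :=
  ∃ ℓ, IsLine F 4 ℓ ∧ K ∩ Pi = ℓ

/-- The intersection of the 3-space `Pi` with `K` is two (distinct) lines. -/
def TypeTwoLines (K Pi : Set (PGPt F 4)) : Prop :=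
  ∃ ℓ m, IsLine F 4 ℓ ∧ IsLine F 4 m ∧ ℓ ≠ m ∧ K ∩ Pi = ℓ ∪ m

/-- The intersection of the 3-space `Pi` with `K` is three (distinct) lines. -/
def TypeThreeLines (K Pi : Set (PGPt F 4)) : Prop :=
  ∃ ℓ m n, IsLine F 4 ℓ ∧ IsLine F 4 m ∧ IsLine F 4 n ∧
    ℓ ≠ m ∧ ℓ ≠ n ∧ m ≠ n ∧ K ∩ Pi = ℓ ∪ m ∪ n

/-- The intersection of the 3-space `Pi` with `K` is a line and a non-degenerate conic. -/
def TypeLineConic (K Pi : Set (PGPt F 4)) : Prop :=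
  ∃ ℓ C, IsLine F 4 ℓ ∧ IsConic F 4 C ∧ K ∩ Pi = ℓ ∪ C

/-- The intersection of the 3-space `Pi` with `K` is a twisted cubic. -/
def TypeTwistedCubic (K Pi : Set (PGPt F 4)) : Prop :=
  ∃ C, IsTwistedCubic F 4 C ∧ K ∩ Pi = C

/-- The intersection of the 3-space `Pi` with `K` is a single point. -/
def TypePoint (K Pi : Set (PGPt F 4)) : Prop :=
  ∃ P, K ∩ Pi = {P}

/-- The intersection of the 3-space `Pi` with `K` is a non-degenerate conic and two lines. -/
def TypeConicTwoLines (K Pi : Set (PGPt F 4)) : Prop :=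
  ∃ C ℓ m, IsConic F 4 C ∧ IsLine F 4 ℓ ∧ IsLine F 4 m ∧ ℓ ≠ m ∧ K ∩ Pi = C ∪ ℓ ∪ m

/-- The intersection of the 3-space `Pi` with `K` is a line and a twisted cubic. -/
def TypeLineTwistedCubic (K Pi : Set (PGPt F 4)) : Prop :=
  ∃ ℓ C, IsLine F 4 ℓ ∧ IsTwistedCubic F 4 C ∧ K ∩ Pi = ℓ ∪ C

/-- Every 3-space meets `K` in one, two or three lines, a line and a
non-degenerate conic, or a twisted cubic. -/
def FiveTypeHyp (K : Set (PGPt F 4)) : Prop :=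
  ∀ Pi, IsSolid F Pi →
    TypeOneLine F K Pi ∨ TypeTwoLines F K Pi ∨ TypeThreeLines F K Pi ∨
      TypeLineConic F K Pi ∨ TypeTwistedCubic F K Pi

/-- Every 3-space meets `K` in one of the eight allowed types. -/
def EightTypeHyp (K : Set (PGPt F 4)) : Prop :=
  ∀ Pi, IsSolid F Pi →
    TypeOneLine F K Pi ∨ TypeTwoLines F K Pi ∨ TypeThreeLines F K Pi ∨
      TypeLineConic F K Pi ∨ TypeTwistedCubic F K Pi ∨
      TypePoint F K Pi ∨ TypeConicTwoLines F K Pi ∨ TypeLineTwistedCubic F K Pi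

/-- `m` lists the `q+1` sticks of `K` (pairwise skew lines partitioning `K`) and `b` is
the baseline: a further line of `K` meeting every stick. -/
def SticksAndBase (q : ℕ) (K : Set (PGPt F 4)) (m : Fin (q + 1) → Set (PGPt F 4))
    (b : Set (PGPt F 4)) : Prop :=
  (∀ i, IsLine F 4 (m i)) ∧ (∀ i j, i ≠ j → Disjoint (m i) (m j)) ∧ (⋃ i, m i) = K ∧
    IsLine F 4 b ∧ b ⊆ K ∧ (∀ i, b ≠ m i) ∧ (∀ i, (b ∩ m i).Nonempty)

open scoped LinearAlgebra.Projectivization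

section LinearAlgebra

variable {k V : Type*} [Field k] [AddCommGroup V] [Module k V]

namespace Projectivization

theorem mk_submodule_le_iff {v : V} (hv : v ≠ 0) (W : Submodule k V) :
    (mk k v hv).submodule ≤ W ↔ v ∈ W := by
  rw [submodule_mk, Submodule.span_singleton_le_iff_mem]

theorem ncard_setOf_submodule_le [Finite k] {W : Submodule k V} (hW : Module.finrank k W = 2) :
    {p : ℙ k V | p.submodule ≤ W}.ncard = Nat.card k + 1 := by
  have hrange : Set.range (map W.subtype W.injective_subtype) = {p | p.submodule ≤ W} := by
    ext p
    constructor
    · rintro ⟨x, rfl⟩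
      rw [← mk_rep x, map_mk, Set.mem_ofPred_eq, mk_submodule_le_iff]
      exact x.rep.2
    · intro hp
      have hrep : p.rep ∈ W := (mk_submodule_le_iff p.rep_nonzero W).1 (by rwa [mk_rep])
      refine ⟨mk k ⟨p.rep, hrep⟩ (by simpa using p.rep_nonzero), ?_⟩
      simp [map_mk, mk_rep]
  rw [← hrange, Set.ncard_range_of_injective (map_injective _ _), card_of_finrank_two k W hW]

theorem setOf_submodule_le_subsingleton [FiniteDimensional k V] {U : Submodule k V}
    (hU : Module.finrank k U ≤ 1) : {p : ℙ k V | p.submodule ≤ U}.Subsingleton := by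
  have hp_eq : ∀ p : ℙ k V, p.submodule ≤ U → p.submodule = U := fun p hp =>
    Submodule.eq_of_le_of_finrank_le hp (by rw [p.finrank_submodule]; exact hU)
  exact fun p hp p' hp' => submodule_injective ((hp_eq p hp).trans (hp_eq p' hp').symm)

end Projectivization

theorem Submodule.finrank_inf_le_one_of_ne [FiniteDimensional k V] {W L : Submodule k V} (hW : Module.finrank k W = 2)
    (hL : Module.finrank k L = 2) (hne : W ≠ L) : Module.finrank k ↥(W ⊓ L) ≤ 1 := by
  by_contra! h
  have hWL : W ⊓ L = W := Submodule.eq_of_le_of_finrank_le inf_le_left (by omega)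
  exact hne (Submodule.eq_of_le_of_finrank_le (hWL ▸ inf_le_right) (by omega))

theorem Matrix.linearIndependent_row_projVandermonde {n : ℕ} {a b : Fin n → k} (h : Pairwise fun i j => a i * b j - a j * b i ≠ 0) :
    LinearIndependent k (projVandermonde b a).row := by
  rw [linearIndependent_rows_iff_isUnit, isUnit_iff_isUnit_det, det_projVandermonde,
    isUnit_iff_ne_zero, Finset.prod_ne_zero_iff]
  intro i _
  rw [Finset.prod_ne_zero_iff]
  intro j hj
  have := h (Finset.mem_Ioi.1 hj).ne
  rwa [mul_comm (b j), mul_comm (b i)]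

theorem exists_proportional_of_mul_sub_mul_eq_zero {a₁ b₁ a₂ b₂ : k}
    (h₁ : a₁ ≠ 0 ∨ b₁ ≠ 0) (h₂ : a₂ ≠ 0 ∨ b₂ ≠ 0) (h : a₁ * b₂ - a₂ * b₁ = 0) :
    ∃ l : k, l ≠ 0 ∧ a₁ = l * a₂ ∧ b₁ = l * b₂ := by
  obtain ⟨l, ha, hb⟩ : ∃ l : k, a₁ = l * a₂ ∧ b₁ = l * b₂ := by
    rcases h₂ with h₂ | h₂
    · exact ⟨a₁ / a₂, by field_simp, by field_simp; linear_combination -h⟩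
    · exact ⟨b₁ / b₂, by field_simp; linear_combination h, by field_simp⟩
  refine ⟨l, ?_, ha, hb⟩
  rintro rfl
  simp_all

-- Ordered so that the rows of `Matrix.projVandermonde b a` are definitionally
-- `normalCurveVec d (a i) (b i)`.
def normalCurveVec (d : ℕ) (a b : k) : Fin (d + 1) → k :=
  fun j => b ^ (j : ℕ) * a ^ (j.rev : ℕ)

def normalCurve (d : ℕ) (f : (Fin (d + 1) → k) →ₗ[k] V) : Set (ℙ k V) :=
  {p | ∃ a b : k, (a ≠ 0 ∨ b ≠ 0) ∧ p.submodule = k ∙ f (normalCurveVec d a b)}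

theorem normalCurveVec_mul_mul (d : ℕ) (l a b : k) :
    normalCurveVec d (l * a) (l * b) = l ^ d • normalCurveVec d a b := by
  funext j
  have hj : (j : ℕ) + j.rev = d := by rw [Fin.val_rev]; omega
  simp only [normalCurveVec, Pi.smul_apply, smul_eq_mul, mul_pow, ← hj, pow_add]
  ring

theorem span_normalCurveVec_eq {d : ℕ} (f : (Fin (d + 1) → k) →ₗ[k] V) {a₁ b₁ a₂ b₂ : k}
    (h₁ : a₁ ≠ 0 ∨ b₁ ≠ 0) (h₂ : a₂ ≠ 0 ∨ b₂ ≠ 0) (h : a₁ * b₂ - a₂ * b₁ = 0) :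
    k ∙ f (normalCurveVec d a₁ b₁) = k ∙ f (normalCurveVec d a₂ b₂) := by
  obtain ⟨l, hl, rfl, rfl⟩ := exists_proportional_of_mul_sub_mul_eq_zero h₁ h₂ h
  rw [normalCurveVec_mul_mul, map_smul,
    Submodule.span_singleton_smul_eq (isUnit_iff_ne_zero.2 (pow_ne_zero d hl))]

theorem ncard_normalCurve_inter_le [FiniteDimensional k V] {d : ℕ}
    {f : (Fin (d + 1) → k) →ₗ[k] V} (hf : Function.Injective f) {U : Submodule k V}
    (hU : Module.finrank k U ≤ d) : (normalCurve d f ∩ {p | p.submodule ≤ U}).ncard ≤ d := by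
  by_contra! h
  obtain ⟨t, hts, htcard⟩ := Set.exists_subset_card_eq (Nat.succ_le_of_lt h)
  have : Finite t := Set.finite_of_ncard_pos (by omega)
  let e : Fin (d + 1) ≃ t :=
    ((Finite.equivFin t).trans (finCongr (by rw [Nat.card_coe_set_eq, htcard]))).symm
  choose a b hab hspan using fun i => (hts (e i).2).1
  have hcross : Pairwise fun i j => a i * b j - a j * b i ≠ 0 := fun i j hij hzero =>
    hij (e.injective (Subtype.ext (submodule_injective (by
      rw [hspan, hspan, span_normalCurveVec_eq f (hab i) (hab j) hzero]))))
  have hli := (Matrix.linearIndependent_row_projVandermonde hcross).map' f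
    (LinearMap.ker_eq_bot.2 hf)
  have hle : Submodule.span k (Set.range (f ∘ (Matrix.projVandermonde b a).row)) ≤ U := by
    rw [Submodule.span_le]
    rintro _ ⟨i, rfl⟩
    exact (Submodule.span_singleton_le_iff_mem _ _).1 (hspan i ▸ (hts (e i).2).2)
  have := Submodule.finrank_mono hle
  rw [finrank_span_eq_card hli, Fintype.card_fin] at this
  omega

end LinearAlgebra

section ProjectiveSpace

variable {k : Type} [Field k] {n : ℕ}

theorem IsConic.exists_eq_normalCurve {C : Set (PGPt k n)} (hC : IsConic k n C) :
    ∃ f : (Fin 3 → k) →ₗ[k] (Fin (n + 1) → k), Function.Injective f ∧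
      C = normalCurve 2 f := by
  obtain ⟨f, hf, rfl⟩ := hC
  have hvec : ∀ a b : k, ![a ^ 2, a * b, b ^ 2] = normalCurveVec 2 a b := by
    intro a b
    funext j
    fin_cases j <;> simp [normalCurveVec, mul_comm]
  exact ⟨f, hf, by simp only [hvec]; rfl⟩

theorem IsTwistedCubic.exists_eq_normalCurve {C : Set (PGPt k n)}
    (hC : IsTwistedCubic k n C) : ∃ f : (Fin 4 → k) →ₗ[k] (Fin (n + 1) → k),
      Function.Injective f ∧ C = normalCurve 3 f := by
  obtain ⟨f, hf, rfl⟩ := hC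
  have hvec : ∀ a b : k, ![a ^ 3, a ^ 2 * b, a * b ^ 2, b ^ 3] = normalCurveVec 3 a b := by
    intro a b
    funext j
    fin_cases j <;> simp [normalCurveVec, mul_comm]
  exact ⟨f, hf, by simp only [hvec]; rfl⟩

theorem IsConic.ncard_inter_le_two {e : ℕ} {C S : Set (PGPt k n)} (hC : IsConic k n C)
    (hS : IsSubsp k n e S) (he : e ≤ 1) : (C ∩ S).ncard ≤ 2 := by
  obtain ⟨f, hf, rfl⟩ := hC.exists_eq_normalCurve
  obtain ⟨U, hU, rfl⟩ := hS
  exact ncard_normalCurve_inter_le hf (by omega)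

theorem IsTwistedCubic.ncard_inter_le_three {e : ℕ} {C S : Set (PGPt k n)}
    (hC : IsTwistedCubic k n C) (hS : IsSubsp k n e S) (he : e ≤ 2) : (C ∩ S).ncard ≤ 3 := by
  obtain ⟨f, hf, rfl⟩ := hC.exists_eq_normalCurve
  obtain ⟨U, hU, rfl⟩ := hS
  exact ncard_normalCurve_inter_le hf (by omega)

theorem IsLine.ncard_eq [Fintype k] {ℓ : Set (PGPt k n)} (hℓ : IsLine k n ℓ) :
    ℓ.ncard = Fintype.card k + 1 := by
  obtain ⟨W, hW, rfl⟩ := hℓ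
  rw [ncard_setOf_submodule_le hW, Nat.card_eq_fintype_card]

theorem IsLine.nonempty [Fintype k] {ℓ : Set (PGPt k n)} (hℓ : IsLine k n ℓ) : ℓ.Nonempty :=
  Set.nonempty_of_ncard_ne_zero (by rw [hℓ.ncard_eq]; omega)

theorem IsLine.inter_subsingleton {ℓ₁ ℓ₂ : Set (PGPt k n)} (h₁ : IsLine k n ℓ₁)
    (h₂ : IsLine k n ℓ₂) (hne : ℓ₁ ≠ ℓ₂) : (ℓ₁ ∩ ℓ₂).Subsingleton := by
  obtain ⟨W, hW, rfl⟩ := h₁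
  obtain ⟨L, hL, rfl⟩ := h₂
  have hinter : {p : PGPt k n | p.submodule ≤ W} ∩ {p | p.submodule ≤ L} =
      {p | p.submodule ≤ W ⊓ L} := by
    ext p
    simp only [Set.mem_inter_iff, Set.mem_ofPred_eq, le_inf_iff]
  rw [hinter]
  exact setOf_submodule_le_subsingleton
    (Submodule.finrank_inf_le_one_of_ne hW hL (by rintro rfl; exact hne rfl))

theorem IsSubsp.inter_nonempty {d e : ℕ} {S T : Set (PGPt k n)} (hS : IsSubsp k n d S)
    (hT : IsSubsp k n e T) (hde : n ≤ d + e) : (S ∩ T).Nonempty := by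
  obtain ⟨W, hW, rfl⟩ := hS
  obtain ⟨L, hL, rfl⟩ := hT
  have hsum := Submodule.finrank_sup_add_finrank_inf_eq W L
  have hsup : Module.finrank k ↥(W ⊔ L) ≤ n + 1 :=
    (Submodule.finrank_le _).trans (Module.finrank_fin_fun k).le
  obtain ⟨v, hv, hv0⟩ := (Submodule.ne_bot_iff (W ⊓ L)).1 fun h => by
    rw [h, finrank_bot] at hsum
    omega
  exact ⟨Projectivization.mk k v hv0, (mk_submodule_le_iff hv0 W).2 hv.1,
    (mk_submodule_le_iff hv0 L).2 hv.2⟩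

theorem IsLine.exists_isSubsp_three_superset_of_disjoint {ℓ₁ ℓ₂ : Set (PGPt k n)}
    (h₁ : IsLine k n ℓ₁) (h₂ : IsLine k n ℓ₂) (hdisj : Disjoint ℓ₁ ℓ₂) :
    ∃ S, IsSubsp k n 3 S ∧ ℓ₁ ⊆ S ∧ ℓ₂ ⊆ S := by
  obtain ⟨W, hW, rfl⟩ := h₁
  obtain ⟨L, hL, rfl⟩ := h₂
  have hinf : W ⊓ L = ⊥ := by
    by_contra h
    obtain ⟨v, hv, hv0⟩ := (Submodule.ne_bot_iff _).1 h
    exact Set.disjoint_left.1 hdisj ((mk_submodule_le_iff hv0 W).2 hv.1)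
      ((mk_submodule_le_iff hv0 L).2 hv.2)
  have hsum := Submodule.finrank_sup_add_finrank_inf_eq W L
  rw [hinf, finrank_bot] at hsum
  exact ⟨{p | p.submodule ≤ W ⊔ L}, ⟨W ⊔ L, by omega, rfl⟩,
    fun p hp => (show p.submodule ≤ W from hp).trans le_sup_left,
    fun p hp => (show p.submodule ≤ L from hp).trans le_sup_right⟩

theorem card_le_two_of_line_subset_union_line_conic [Fintype k] {s ℓ C : Set (PGPt k n)}
    (hs : IsLine k n s) (hℓ : IsLine k n ℓ) (hne : s ≠ ℓ) (hC : IsConic k n C)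
    (hsub : s ⊆ ℓ ∪ C) : Fintype.card k ≤ 2 := by
  have hsplit : s = (s ∩ ℓ) ∪ (C ∩ s) := by
    rw [Set.inter_comm C, ← Set.inter_union_distrib_left, Set.inter_eq_left.2 hsub]
  have := Set.ncard_union_le (s ∩ ℓ) (C ∩ s)
  rw [← hsplit, hs.ncard_eq] at this
  have := Set.ncard_le_one_iff_subsingleton.2 (hs.inter_subsingleton hℓ hne)
  have := hC.ncard_inter_le_two hs le_rfl
  omega

theorem card_le_two_of_skew_lines_subset_union_line_conic [Fintype k]
    {s₁ s₂ ℓ C : Set (PGPt k n)} (h₁ : IsLine k n s₁) (h₂ : IsLine k n s₂)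
    (hdisj : Disjoint s₁ s₂) (hℓ : IsLine k n ℓ) (hC : IsConic k n C) (hsub₁ : s₁ ⊆ ℓ ∪ C)
    (hsub₂ : s₂ ⊆ ℓ ∪ C) : Fintype.card k ≤ 2 := by
  have hne : s₁ ≠ s₂ := fun h => h₂.nonempty.ne_empty (disjoint_self.1 (h ▸ hdisj))
  by_cases h : s₁ = ℓ
  · exact card_le_two_of_line_subset_union_line_conic h₂ hℓ (h ▸ hne.symm) hC hsub₂
  · exact card_le_two_of_line_subset_union_line_conic h₁ hℓ h hC hsub₁

theorem card_le_two_of_line_subset_twistedCubic [Fintype k] {s C : Set (PGPt k n)}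
    (hs : IsLine k n s) (hC : IsTwistedCubic k n C) (hsub : s ⊆ C) : Fintype.card k ≤ 2 := by
  have := hC.ncard_inter_le_three hs (by norm_num)
  rw [Set.inter_eq_right.2 hsub, hs.ncard_eq] at this
  omega

end ProjectiveSpace

theorem not_inter_subset_biUnion_of_card_lt {α ι : Type*} [Fintype ι] {m : ι → Set α}
    {K S : Set α} (hdisj : Pairwise (Function.onFun Disjoint m)) (hsub : ∀ i, m i ⊆ K)
    (hmeet : ∀ i, (m i ∩ S).Nonempty) {J : Finset ι} (hJ : J.card < Fintype.card ι) :
    ¬ K ∩ S ⊆ ⋃ j ∈ J, m j := by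
  intro hcov
  obtain ⟨i, -, hiJ⟩ := Finset.exists_mem_notMem_of_card_lt_card (s := J) (t := Finset.univ) hJ
  obtain ⟨p, hpi, hpS⟩ := hmeet i
  obtain ⟨j, hjJ, hpj⟩ := Set.mem_iUnion₂.1 (hcov ⟨hsub i hpi, hpS⟩)
  exact Set.disjoint_left.1 (hdisj (ne_of_mem_of_not_mem hjJ hiJ).symm) hpi hpj

theorem stmt18 (q : ℕ) (hq : Fintype.card F = q) (h3 : 3 ≤ q) (K : Set (PGPt F 4))
    (hyp : FiveTypeHyp F K)
    (m : Fin (q + 1) → Set (PGPt F 4))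
    (hlines : ∀ i, IsLine F 4 (m i))
    (hdisj : ∀ i j, i ≠ j → Disjoint (m i) (m j))
    (hcover : (⋃ i, m i) = K)
    (hnoother : ∀ ℓ : Set (PGPt F 4), IsLine F 4 ℓ → ℓ ⊆ K → ∃ i, ℓ = m i) :
    False := by
  have hlast : (0 : Fin (q + 1)) ≠ Fin.last q := by simp [Fin.ext_iff]; omega
  obtain ⟨S, hS, h0S, hlastS⟩ :=
    (hlines 0).exists_isSubsp_three_superset_of_disjoint (hlines _) (hdisj _ _ hlast)
  have hsubK : ∀ i, m i ⊆ K := fun i => hcover ▸ Set.subset_iUnion m i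
  have hstick : ∀ ℓ, IsLine F 4 ℓ → ℓ ⊆ K ∩ S → ∃ j, ℓ = m j :=
    fun ℓ hℓ h => hnoother ℓ hℓ (h.trans Set.inter_subset_left)
  have hfew : ∀ J : Finset (Fin (q + 1)), J.card ≤ 3 → ¬ K ∩ S ⊆ ⋃ j ∈ J, m j :=
    fun J hJ => not_inter_subset_biUnion_of_card_lt hdisj hsubK
      (fun i => (hlines i).inter_nonempty hS le_rfl) (by simp; omega)
  rcases hyp S hS with ⟨ℓ, hℓ, heq⟩ | ⟨ℓ, ℓ', hℓ, hℓ', -, heq⟩ |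
    ⟨ℓ, ℓ', ℓ'', hℓ, hℓ', hℓ'', -, -, -, heq⟩ | ⟨ℓ, C, hℓ, hC, heq⟩ | ⟨C, hC, heq⟩
  · obtain ⟨j, rfl⟩ := hstick ℓ hℓ heq.ge
    exact hfew {j} (by simp) (by simp [heq])
  · obtain ⟨j, rfl⟩ := hstick ℓ hℓ (heq ▸ Set.subset_union_left)
    obtain ⟨j', rfl⟩ := hstick ℓ' hℓ' (heq ▸ Set.subset_union_right)
    exact hfew {j, j'} (Finset.card_le_two.trans (by norm_num)) (by simp [heq])
  · obtain ⟨j, rfl⟩ := hstick ℓ hℓ (heq ▸ Set.subset_union_left.trans Set.subset_union_left)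
    obtain ⟨j', rfl⟩ := hstick ℓ' hℓ' (heq ▸ Set.subset_union_right.trans Set.subset_union_left)
    obtain ⟨j'', rfl⟩ := hstick ℓ'' hℓ'' (heq ▸ Set.subset_union_right)
    exact hfew {j, j', j''} Finset.card_le_three (by simp [heq, Set.union_assoc])
  · have := card_le_two_of_skew_lines_subset_union_line_conic (hlines 0) (hlines _)
      (hdisj _ _ hlast) hℓ hC (heq ▸ Set.subset_inter (hsubK 0) h0S)
      (heq ▸ Set.subset_inter (hsubK _) hlastS)
    omega
  · have := card_le_two_of_line_subset_twistedCubic (hlines 0) hC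
      (heq ▸ Set.subset_inter (hsubK 0) h0S)
    omega
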